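/- arXiv:1712.04506 — 2 statements merged into one kernel-verified Lean document; each statement's English description precedes it below -/
import Mathlib

section
/- A q-cycle σ ∈ 𝒞_q has a realization (f, 𝒪) by a covering map f: ℝ/ℤ → ℝ/ℤ of degree k if and only if k ≥ des(σ). In particular, the minimal degree of a covering map of the circle admitting a period q orbit realizing σ equals des(σ). -/
open scoped Classical

noncomputable section

/-- The representative of `i : ZMod q` in `{1, …, q}`. -/
def rep (q : ℕ) [NeZero q] (i : ZMod q) : ℕ :=
  if i = 0 then q else i.val

/-- The rotation `ρ : i ↦ i + 1 (mod q)` of `ZMod q`. -/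
def rotPerm (q : ℕ) : Equiv.Perm (ZMod q) :=
  Equiv.addRight 1

/-- The descent number `des σ`: the number of `i ∈ ZMod q` with `σ(i) > σ(i+1)`,
values compared via their representatives in `{1, …, q}`. -/
def desNum (q : ℕ) [NeZero q] (σ : Equiv.Perm (ZMod q)) : ℕ :=
  (Finset.univ.filter fun i : ZMod q => rep q (σ (i + 1)) < rep q (σ i)).card

/-- `σ` is a `q`-cycle, i.e. it acts transitively on `ZMod q`. -/
def IsQCycle (q : ℕ) (σ : Equiv.Perm (ZMod q)) : Prop :=
  ∀ i j : ZMod q, ∃ n : ℕ, (σ ^ n) i = j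

/-- The transition matrix of `σ`: the `(i,j)` entry is `1` if `j` lies in the
cyclic interval `[σ(i), σ(i+1))` of `ZMod q` and `0` otherwise. -/
def transMatrix (q : ℕ) [NeZero q] (σ : Equiv.Perm (ZMod q)) :
    Matrix (ZMod q) (ZMod q) ℝ :=
  Matrix.of fun i j => if (j - σ i).val < (σ (i + 1) - σ i).val then (1 : ℝ) else 0

/-- A probability vector: non-negative components summing to `1`. -/
def IsProbVec (q : ℕ) [NeZero q] (v : ZMod q → ℝ) : Prop :=
  (∀ i, 0 ≤ v i) ∧ ∑ i, v i = 1

/-- The symmetry order of `σ`: the order of the stabilizer of `σ` in the rotation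
group `⟨ρ⟩` acting by conjugation. -/
def symOrder (q : ℕ) [NeZero q] (σ : Equiv.Perm (ZMod q)) : ℕ :=
  ((Finset.range q).filter fun j => rotPerm q ^ j * σ * (rotPerm q ^ j)⁻¹ = σ).card

/-- `F : ℝ → ℝ` is a lift of a degree `k` covering map of `ℝ/ℤ`:
a homeomorphism of `ℝ` with `F (t+1) = F t + k`. -/
def IsDegreeLift (k : ℕ) (F : ℝ → ℝ) : Prop :=
  Continuous F ∧ StrictMono F ∧ ∀ t, F (t + 1) = F t + k

/-- The fixed point of the circle map corresponding to `u` (a point with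
`F u - u ∈ ℤ`) is topologically repelling: `t ↦ F t - t` is strictly increasing
in a neighborhood of `u`. -/
def TopRepelling (F : ℝ → ℝ) (u : ℝ) : Prop :=
  ∃ ε > 0, StrictMonoOn (fun t => F t - t) (Set.Ioo (u - ε) (u + ε))

/-- `x : ZMod q → ℝ` is a period `q` orbit realizing `σ` for the circle map with
lift `F`: the points `x i` lie in `(0,1)` and are increasing with respect to the
representatives `{1, …, q}` (so that `0, x₁, …, x_q` are in positive cyclic
order), and on the circle `f(x i) = x (σ i)` for all `i`. -/
def IsRealization (q : ℕ) [NeZero q] (σ : Equiv.Perm (ZMod q))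
    (F : ℝ → ℝ) (x : ZMod q → ℝ) : Prop :=
  (∀ i, x i ∈ Set.Ioo (0 : ℝ) 1) ∧
  (∀ i j : ZMod q, rep q i < rep q j → x i < x j) ∧
  (∀ i, ∃ m : ℤ, F (x i) = x (σ i) + m)

/-- A realization of `σ` under the multiplication map `m_k : x ↦ kx (mod ℤ)`. -/
def MkRealization (q k : ℕ) [NeZero q] (σ : Equiv.Perm (ZMod q)) (x : ZMod q → ℝ) : Prop :=
  IsRealization q σ (fun t => (k : ℝ) * t) x

/-- The upper endpoint (as a real number) of the partition interval
`I i = [x i, x (i+1)]`; for `i = 0 ≡ q` the interval wraps around `0 ∈ ℝ/ℤ`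
and the endpoint is `x 1 + 1`. -/
def upperPt (q : ℕ) [NeZero q] (x : ZMod q → ℝ) (i : ZMod q) : ℝ :=
  if i = 0 then x 1 + 1 else x (i + 1)

/-- The `i`-th component of the fixed point distribution: the number of fixed
points of `m_k` (the points `j/(k-1) (mod ℤ)`) in the interior of the partition
interval `I i`. -/
def fixDist (q k : ℕ) [NeZero q] (x : ZMod q → ℝ) (i : ZMod q) : ℕ :=
  ((Finset.Icc 1 (2 * (k - 1))).filter fun j : ℕ =>
    x i < (j : ℝ) / ((k : ℝ) - 1) ∧ (j : ℝ) / ((k : ℝ) - 1) < upperPt q x i).card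

/-- The number of fixed points of `m_k` in the interval `(0, x 1)`. -/
def countFixBelow (q k : ℕ) [NeZero q] (x : ZMod q → ℝ) : ℕ :=
  ((Finset.range (k - 1)).filter fun j : ℕ =>
    0 < j ∧ (j : ℝ) / ((k : ℝ) - 1) < x 1).card

/-- The `m`-th component of the (cumulative) deployment vector: the number of
orbit points in `(0, m/(k-1))`. -/
def depCount (q k : ℕ) [NeZero q] (x : ZMod q → ℝ) (m : ℕ) : ℕ :=
  (Finset.univ.filter fun j : ZMod q => x j < (m : ℝ) / ((k : ℝ) - 1)).card

/-- The rank of a marked index `i` among the marked indices `i₁ < ⋯ < i_{d-1}`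
(ordered by their representatives in `{1, …, q}`). -/
def markRank (q : ℕ) [NeZero q] (σ : Equiv.Perm (ZMod q)) (i : ZMod q) : ℕ :=
  (Finset.univ.filter fun i' : ZMod q =>
    transMatrix q σ i' i' = 1 ∧ rep q i' ≤ rep q i).card

/-!
If `F` lifts a degree `k` map and `F (x i) = x (σ i) + m i`, then, since `F` is increasing, the
difference `m (i + 1) - m i` is at least `1` at every descent of `σ` and at least `0` elsewhere,
where on the wrap-around step from `x q` to `x 1 + 1` the difference is `m 1 + k - m q`. These
differences telescope to `k` around the circle, hence `des σ ≤ k`.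

Conversely, put `x i = (i - 1/2) / q` and let `m i` count the descents of `σ` before `i`.
Then `x (σ i) + m i` increases with `i`, and once `k ≥ des σ` it still increases across the
wrap-around step after adding `k`; the linear interpolation of these values, extended by
`F (t + 1) = F t + k`, is the required lift.
-/

open Set Filter

section Rep

variable {q : ℕ} [NeZero q]

lemma one_le_rep (i : ZMod q) : 1 ≤ rep q i := by
  unfold rep
  split_ifs with h
  · exact NeZero.one_le
  · exact Nat.one_le_iff_ne_zero.2 fun h0 => h ((ZMod.val_eq_zero i).1 h0)

lemma rep_le (i : ZMod q) : rep q i ≤ q := by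
  unfold rep
  split_ifs
  exacts [le_rfl, (ZMod.val_lt i).le]

lemma rep_zero : rep q (0 : ZMod q) = q := if_pos rfl

lemma natCast_rep (i : ZMod q) : ((rep q i : ℕ) : ZMod q) = i := by
  unfold rep
  split_ifs with h
  · rw [h, ZMod.natCast_self]
  · exact ZMod.natCast_zmod_val i

lemma rep_injective : Function.Injective (rep q) :=
  Function.LeftInverse.injective natCast_rep

lemma rep_natCast {r : ℕ} (h1 : 1 ≤ r) (h2 : r ≤ q) : rep q (r : ZMod q) = r := by
  rcases h2.eq_or_lt with rfl | hlt
  · rw [ZMod.natCast_self, rep_zero]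
  · have hval : (r : ZMod q).val = r := ZMod.val_cast_of_lt hlt
    have hne : (r : ZMod q) ≠ 0 := fun h => by rw [h, ZMod.val_zero] at hval; omega
    rw [rep, if_neg hne, hval]

lemma rep_add_one (i : ZMod q) : rep q (i + 1) + (if i = 0 then q else 0) = rep q i + 1 := by
  split_ifs with h
  · rw [h, zero_add, ← Nat.cast_one, rep_natCast le_rfl NeZero.one_le, rep_zero, add_comm]
  · have hlt : rep q i < q := by
      rw [rep, if_neg h]; exact ZMod.val_lt i
    rw [add_zero, ← rep_natCast (Nat.le_add_left 1 _) hlt, Nat.cast_add, natCast_rep,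
      Nat.cast_one]

end Rep

section PiecewiseLinear

variable {V : ℤ → ℝ}

def piecewiseLinear (V : ℤ → ℝ) (s : ℝ) : ℝ :=
  V ⌊s⌋ + Int.fract s * (V (⌊s⌋ + 1) - V ⌊s⌋)

lemma piecewiseLinear_intCast (n : ℤ) : piecewiseLinear V n = V n := by
  simp [piecewiseLinear]

lemma piecewiseLinear_eq_of_mem_Icc {n : ℤ} {s : ℝ} (hs : s ∈ Icc (n : ℝ) (n + 1)) :
    piecewiseLinear V s = V n + (s - n) * (V (n + 1) - V n) := by
  rcases hs.2.eq_or_lt with rfl | hlt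
  · rw [show (n : ℝ) + 1 = ((n + 1 : ℤ) : ℝ) by push_cast; ring, piecewiseLinear_intCast]
    push_cast
    ring
  · have hfloor : ⌊s⌋ = n := Int.floor_eq_iff.2 ⟨hs.1, hlt⟩
    rw [piecewiseLinear, ← Int.self_sub_floor, hfloor]

lemma continuous_piecewiseLinear : Continuous (piecewiseLinear V) := by
  refine LocallyFinite.continuous (f := fun n : ℤ => Icc (n : ℝ) (n + 1)) ?_
    (iUnion_Icc_intCast ℝ) (fun _ => isClosed_Icc) fun n => ?_
  · exact locallyFinite_Icc_of_tendsto tendsto_intCast_atTop_atTop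
      (tendsto_atBot_add_const_right _ _ (tendsto_intCast_atBot_iff.2 tendsto_id))
  · exact (Continuous.continuousOn (by fun_prop)).congr fun s hs =>
      piecewiseLinear_eq_of_mem_Icc hs

lemma piecewiseLinear_lt_succ_floor (hV : StrictMono V) (s : ℝ) :
    piecewiseLinear V s < V (⌊s⌋ + 1) := by
  have := hV (Int.lt_succ ⌊s⌋)
  have := Int.fract_lt_one s
  rw [piecewiseLinear]
  nlinarith

lemma floor_le_piecewiseLinear (hV : StrictMono V) (s : ℝ) :
    V ⌊s⌋ ≤ piecewiseLinear V s := by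
  have := hV (Int.lt_succ ⌊s⌋)
  have := Int.fract_nonneg s
  rw [piecewiseLinear]
  nlinarith

lemma strictMono_piecewiseLinear (hV : StrictMono V) : StrictMono (piecewiseLinear V) := by
  intro s t hst
  rcases (Int.floor_le_floor hst.le).eq_or_lt with hfloor | hfloor
  · have := hV (Int.lt_succ ⌊s⌋)
    have : Int.fract s < Int.fract t := by
      rw [← Int.self_sub_floor, ← Int.self_sub_floor, hfloor]; linarith
    rw [piecewiseLinear, piecewiseLinear, ← hfloor]
    nlinarith
  · calc piecewiseLinear V s < V (⌊s⌋ + 1) := piecewiseLinear_lt_succ_floor hV s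
      _ ≤ V ⌊t⌋ := hV.monotone hfloor
      _ ≤ piecewiseLinear V t := floor_le_piecewiseLinear hV t

lemma piecewiseLinear_add_intCast {p : ℤ} {c : ℝ} (hV : ∀ n, V (n + p) = V n + c) (s : ℝ) :
    piecewiseLinear V (s + p) = piecewiseLinear V s + c := by
  simp only [piecewiseLinear, Int.floor_add_intCast, Int.fract_add_intCast, hV,
    add_right_comm _ p 1]
  ring

end PiecewiseLinear

section Forward

variable {q k : ℕ} [NeZero q] {σ : Equiv.Perm (ZMod q)}

lemma natCast_desNum (σ : Equiv.Perm (ZMod q)) :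
    (desNum q σ : ℤ) = ∑ i, if rep q (σ (i + 1)) < rep q (σ i) then 1 else 0 := by
  rw [desNum, Finset.card_filter]
  push_cast
  rfl

lemma add_ite_le_of_add_lt_add {P : Prop} [Decidable P] {u v : ℝ} {m m' : ℤ}
    (hP : P → v < u) (hvu : v < u + 1) (h : u + m < v + m') :
    m + (if P then 1 else 0) ≤ m' := by
  split_ifs with hp
  · have : (m : ℝ) < m' := by linarith [hP hp]
    exact_mod_cast this
  · have : (m : ℝ) < m' + 1 := by linarith
    have : m < m' + 1 := by exact_mod_cast this
    omega

lemma IsRealization.lt_add_ite {F : ℝ → ℝ} {x : ZMod q → ℝ} (hx : IsRealization q σ F x)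
    (i : ZMod q) : x i < x (i + 1) + if i = 0 then 1 else 0 := by
  split_ifs with h
  · rw [h, zero_add]
    linarith [(hx.1 0).2, (hx.1 1).1]
  · have := rep_add_one i
    rw [if_neg h] at this
    exact (hx.2.1 _ _ (by omega)).trans_le (le_add_of_nonneg_right le_rfl)

theorem desNum_le_of_isRealization {F : ℝ → ℝ} {x : ZMod q → ℝ} (hF : IsDegreeLift k F)
    (hx : IsRealization q σ F x) : desNum q σ ≤ k := by
  obtain ⟨-, hmono, hper⟩ := hF
  choose m hm using hx.2.2
  have hF_step (i : ZMod q) : F (x i) < F (x (i + 1)) + if i = 0 then (k : ℝ) else 0 := by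
    have := hmono (hx.lt_add_ite i)
    split_ifs at this ⊢
    · rwa [hper] at this
    · rwa [add_zero] at this ⊢
  have hm_step (i : ZMod q) : m i + (if rep q (σ (i + 1)) < rep q (σ i) then 1 else 0)
      ≤ m (i + 1) + if i = 0 then (k : ℤ) else 0 := by
    refine add_ite_le_of_add_lt_add (fun h => hx.2.1 _ _ h)
      (by linarith [(hx.1 (σ i)).1, (hx.1 (σ (i + 1))).2]) ?_
    have := hF_step i
    rw [hm, hm] at this
    push_cast
    split_ifs at this ⊢ <;> linarith
  have hshift : ∑ i, m (i + 1) = ∑ i, m i := Equiv.sum_comp (Equiv.addRight 1) m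
  have hsum := Finset.sum_le_sum fun i (_ : i ∈ Finset.univ) => hm_step i
  rw [Finset.sum_add_distrib, Finset.sum_add_distrib, ← natCast_desNum, hshift,
    Finset.sum_ite_eq' Finset.univ (0 : ZMod q),
    if_pos (Finset.mem_univ _)] at hsum
  exact_mod_cast (add_le_add_iff_left _).1 hsum

end Forward

section Construction

open Finset

variable {q k : ℕ} [NeZero q] {σ : Equiv.Perm (ZMod q)}

lemma card_filter_rep_lt_add_one (p : ZMod q → Prop) [DecidablePred p] (i : ZMod q) :
    #{i' | rep q i' < rep q i + 1 ∧ p i'}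
      = #{i' | rep q i' < rep q i ∧ p i'} + if p i then 1 else 0 := by
  rw [card_filter, card_filter, ← Fintype.sum_ite_eq' i fun i' => if p i' then 1 else 0,
    ← sum_add_distrib]
  refine sum_congr rfl fun i' _ => ?_
  by_cases h : i' = i
  · subst h
    simp
  · have := rep_injective.ne h
    simp only [h, if_false, add_zero]
    split_ifs <;> grind

def orbitPt (q : ℕ) [NeZero q] (i : ZMod q) : ℝ := ((rep q i : ℝ) - 1 / 2) / q

lemma orbitPt_mem_Ioo (i : ZMod q) : orbitPt q i ∈ Set.Ioo 0 1 := by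
  have h1 : (1 : ℝ) ≤ rep q i := by exact_mod_cast one_le_rep i
  have h2 : (rep q i : ℝ) ≤ q := by exact_mod_cast rep_le i
  have hq : (0 : ℝ) < q := by exact_mod_cast NeZero.pos q
  constructor
  · exact div_pos (by linarith) hq
  · rw [orbitPt, div_lt_one hq]; linarith

lemma orbitPt_lt_orbitPt {i j : ZMod q} (h : rep q i < rep q j) : orbitPt q i < orbitPt q j := by
  have hq : (0 : ℝ) < q := by exact_mod_cast NeZero.pos q
  have : (rep q i : ℝ) < rep q j := by exact_mod_cast h
  exact div_lt_div_of_pos_right (by linarith) hq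

lemma orbitPt_lt_orbitPt_add_ite {a b : ZMod q} (hab : a ≠ b) :
    orbitPt q a < orbitPt q b + if rep q b < rep q a then 1 else 0 := by
  split_ifs with h
  · linarith [(orbitPt_mem_Ioo (q := q) a).2, (orbitPt_mem_Ioo (q := q) b).1]
  · have := rep_injective.ne hab
    linarith [orbitPt_lt_orbitPt (q := q) (i := a) (j := b) (by omega)]

def descentsBelow (σ : Equiv.Perm (ZMod q)) (i : ZMod q) : ℕ :=
  #{i' | rep q i' < rep q i ∧ rep q (σ (i' + 1)) < rep q (σ i')}

lemma descentsBelow_add_ite_le (hk : desNum q σ ≤ k) (i : ZMod q) :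
    descentsBelow σ i + (if rep q (σ (i + 1)) < rep q (σ i) then 1 else 0)
      ≤ descentsBelow σ (i + 1) + if i = 0 then k else 0 := by
  rw [descentsBelow, ← card_filter_rep_lt_add_one]
  split_ifs with h
  · exact (Finset.card_le_card (monotone_filter_right _ fun _ _ => And.right)).trans
      (hk.trans (Nat.le_add_left _ _))
  · have := rep_add_one i
    rw [if_neg h] at this
    simp only [descentsBelow, ← this, add_zero, le_refl]

def orbitImage (σ : Equiv.Perm (ZMod q)) (i : ZMod q) : ℝ :=
  orbitPt q (σ i) + descentsBelow σ i

lemma orbitImage_lt_add_ite (hq : 2 ≤ q) (hk : desNum q σ ≤ k) (i : ZMod q) :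
    orbitImage σ i < orbitImage σ (i + 1) + if i = 0 then (k : ℝ) else 0 := by
  have : Fact (1 < q) := ⟨hq⟩
  have hpt := orbitPt_lt_orbitPt_add_ite (q := q) (σ.injective.ne (add_ne_left.2 one_ne_zero)).symm
    (a := σ i) (b := σ (i + 1))
  have hcount : ((descentsBelow σ i + if rep q (σ (i + 1)) < rep q (σ i) then 1 else 0 : ℕ)
      : ℝ) ≤ (descentsBelow σ (i + 1) + if i = 0 then k else 0 : ℕ) := by
    exact_mod_cast descentsBelow_add_ite_le hk i
  unfold orbitImage
  push_cast at hcount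
  split_ifs at hpt hcount ⊢ <;> linarith

-- the value of the lift at the `n`-th lifted orbit point `(n - 1/2) / q`
def liftNode (q k : ℕ) [NeZero q] (σ : Equiv.Perm (ZMod q)) (n : ℤ) : ℝ :=
  orbitImage σ n + k * ((n : ℝ) - rep q n) / q

lemma liftNode_add_period (n : ℤ) : liftNode q k σ (n + q) = liftNode q k σ n + k := by
  have hq : (q : ℝ) ≠ 0 := by exact_mod_cast NeZero.ne q
  simp only [liftNode, Int.cast_add, Int.cast_natCast, ZMod.natCast_self, add_zero]
  field_simp
  ring

lemma liftNode_rep (i : ZMod q) : liftNode q k σ (rep q i) = orbitImage σ i := by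
  simp [liftNode, natCast_rep]

lemma liftNode_lt_succ (hq : 2 ≤ q) (hk : desNum q σ ≤ k) (n : ℤ) :
    liftNode q k σ n < liftNode q k σ (n + 1) := by
  have hq0 : (q : ℝ) ≠ 0 := by exact_mod_cast NeZero.ne q
  have hrep : (rep q ((n : ZMod q) + 1) : ℝ) + (if (n : ZMod q) = 0 then (q : ℝ) else 0)
      = rep q (n : ZMod q) + 1 := by exact_mod_cast rep_add_one (n : ZMod q)
  have himg := orbitImage_lt_add_ite hq hk (n : ZMod q)
  simp only [liftNode, Int.cast_add, Int.cast_one]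
  split_ifs at hrep himg
  · have : (k : ℝ) * ((n : ℝ) + 1 - rep q ((n : ZMod q) + 1)) / q
        = k * ((n : ℝ) - rep q (n : ZMod q)) / q + k := by
      rw [show (rep q ((n : ZMod q) + 1) : ℝ) = rep q (n : ZMod q) + 1 - q by linarith]
      field_simp
      ring
    linarith
  · rw [show (n : ℝ) + 1 - rep q ((n : ZMod q) + 1) = n - rep q (n : ZMod q) by linarith]
    linarith

theorem exists_realization_of_desNum_le (hq : 2 ≤ q) (hk : desNum q σ ≤ k) :
    ∃ F : ℝ → ℝ, ∃ x : ZMod q → ℝ, IsDegreeLift k F ∧ IsRealization q σ F x := by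
  have hq0 : (0 : ℝ) < q := by exact_mod_cast NeZero.pos q
  have hV : StrictMono (liftNode q k σ) := strictMono_int_of_lt_succ (liftNode_lt_succ hq hk)
  refine ⟨fun t => piecewiseLinear (liftNode q k σ) (q * t + 1 / 2), orbitPt q,
    ⟨continuous_piecewiseLinear.comp (by fun_prop), ?_, fun t => ?_⟩,
    orbitPt_mem_Ioo, fun i j h => orbitPt_lt_orbitPt h, fun i => ⟨descentsBelow σ i, ?_⟩⟩
  · exact (strictMono_piecewiseLinear hV).comp ((strictMono_mul_left_of_pos hq0).add_const _)
  · dsimp only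
    rw [show (q : ℝ) * (t + 1) + 1 / 2 = q * t + 1 / 2 + ((q : ℤ) : ℝ) by push_cast; ring]
    exact piecewiseLinear_add_intCast liftNode_add_period _
  · dsimp only
    rw [show (q : ℝ) * orbitPt q i + 1 / 2 = ((rep q i : ℤ) : ℝ) by
      rw [orbitPt]; push_cast; field_simp; ring, piecewiseLinear_intCast, liftNode_rep, orbitImage]
    push_cast
    rfl

end Construction

theorem realization_iff_degree_ge_descent_general (q k : ℕ) [NeZero q] (hq : 2 ≤ q)
    (σ : Equiv.Perm (ZMod q)) :
    ((∃ F : ℝ → ℝ, ∃ x : ZMod q → ℝ, IsDegreeLift k F ∧ IsRealization q σ F x) ↔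
      desNum q σ ≤ k) ∧
    sInf {k' : ℕ | ∃ F : ℝ → ℝ, ∃ x : ZMod q → ℝ,
      IsDegreeLift k' F ∧ IsRealization q σ F x} = desNum q σ := by
  have hiff (k' : ℕ) :
      (∃ F : ℝ → ℝ, ∃ x : ZMod q → ℝ, IsDegreeLift k' F ∧ IsRealization q σ F x) ↔
        desNum q σ ≤ k' :=
    ⟨fun ⟨_, _, hF, hx⟩ => desNum_le_of_isRealization hF hx,
      exists_realization_of_desNum_le hq⟩
  refine ⟨hiff k, ?_⟩
  rw [Set.ext hiff]
  exact csInf_Ici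

/-- A `q`-cycle `σ` has a realization by a covering map of degree `k` iff
`k ≥ des σ`; in particular the minimal degree of a covering map of the circle
admitting a period `q` orbit realizing `σ` is `des σ`. -/
theorem realization_iff_degree_ge_descent (q k : ℕ) [NeZero q] (hq : 2 ≤ q)
    (σ : Equiv.Perm (ZMod q)) (hσ : IsQCycle q σ) :
    ((∃ F : ℝ → ℝ, ∃ x : ZMod q → ℝ, IsDegreeLift k F ∧ IsRealization q σ F x) ↔
      desNum q σ ≤ k) ∧
    sInf {k' : ℕ | ∃ F : ℝ → ℝ, ∃ x : ZMod q → ℝ,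
      IsDegreeLift k' F ∧ IsRealization q σ F x} = desNum q σ :=
  realization_iff_degree_ge_descent_general q k hq σ
end
end

section
/- Let σ ∈ 𝒞_q with des(σ) = d, let p = (p₁,…,p_q) be a non-negative integer vector with p ≠ 0, and let B = A + P be the transition matrix of the pair (σ, p), where A is the transition matrix of σ and P is the q × q matrix whose every column equals p. Set k = d + Σᵢ pᵢ. Then there is a unique probability vector ℓ ∈ ℝ^q with Bℓ = kℓ; moreover ℓ has strictly positive components and satisfies ℓ = lim_{n→∞} (1/kⁿ) Bⁿ v for every probability vector v ∈ ℝ^q. -/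
open scoped Classical

noncomputable section

/-!
Put `T = k⁻¹ • B`. Moving `j` to `j + 1` changes the `j`-th column sum of the transition
matrix `A` of `σ` by `∑ᵢ ([σ (i+1) = j+1] - [σ i = j+1]) = 0`, and the column at `0` counts the
descents, so every column of `A` sums to `d`. Hence `T` is column-stochastic, and on vectors of
sum zero it acts as `k⁻¹ • A`, which shrinks the `ℓ¹` norm by the factor `d / k < 1`. So `Tⁿ v`
converges to any fixed probability vector, which is therefore unique. A fixed vector exists
because `1 ᵥ* (1 - T) = 0`; its sum is nonzero by the contraction, and after normalising it is
nonnegative as a limit of nonnegative iterates. Finally `A i (σ i) = 1` gives `ℓ (σ i) ≤ k ℓ i`,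
so positivity spreads from one coordinate along the cycle `σ`.
-/

open Matrix Filter Topology

namespace Matrix

variable {ι : Type*} [Fintype ι]

def ContractsSumZero (T : Matrix ι ι ℝ) (r : ℝ) : Prop :=
  ∀ u : ι → ℝ, ∑ i, u i = 0 → ∑ i, |(T *ᵥ u) i| ≤ r * ∑ i, |u i|

lemma pow_mulVec_eq_self [DecidableEq ι] {T : Matrix ι ι ℝ} {v : ι → ℝ} (hv : T *ᵥ v = v)
    (n : ℕ) : T ^ n *ᵥ v = v := by
  induction n with
  | zero => exact one_mulVec v
  | succ n ih => rw [pow_succ, ← mulVec_mulVec, hv, ih]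

lemma eq_of_mulVec_eq_self {T : Matrix ι ι ℝ} {r : ℝ} (hc : T.ContractsSumZero r) (hr : r < 1)
    {v w : ι → ℝ} (hvw : ∑ i, v i = ∑ i, w i) (hv : T *ᵥ v = v) (hw : T *ᵥ w = w) : v = w := by
  have hu : ∑ i, (v - w) i = 0 := by simp [Finset.sum_sub_distrib, hvw]
  have hle : ∑ i, |(v - w) i| ≤ r * ∑ i, |(v - w) i| := by
    simpa only [mulVec_sub, hv, hw] using hc (v - w) hu
  have hnonneg : 0 ≤ ∑ i, |(v - w) i| := Finset.sum_nonneg fun i _ => abs_nonneg _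
  have hzero : ∑ i, |(v - w) i| = 0 := le_antisymm (by nlinarith) hnonneg
  funext i
  exact sub_eq_zero.1 <| abs_eq_zero.1 <|
    (Finset.sum_eq_zero_iff_of_nonneg fun j _ => abs_nonneg _).1 hzero i (Finset.mem_univ i)

section ColStochastic

variable [DecidableEq ι] {T : Matrix ι ι ℝ} {r : ℝ}

lemma sum_abs_pow_mulVec_le (hT : T ∈ colStochastic ℝ ι) (hc : T.ContractsSumZero r)
    (hr : 0 ≤ r) {u : ι → ℝ} (hu : ∑ i, u i = 0) (n : ℕ) :
    ∑ i, |(T ^ n *ᵥ u) i| ≤ r ^ n * ∑ i, |u i| := by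
  induction n with
  | zero => simp
  | succ n ih =>
    have hsum : ∑ i, (T ^ n *ᵥ u) i = 0 := by
      rw [sum_mulVec_of_mem_colStochastic (pow_mem hT n), hu]
    calc ∑ i, |(T ^ (n + 1) *ᵥ u) i| = ∑ i, |(T *ᵥ (T ^ n *ᵥ u)) i| := by
          rw [pow_succ', mulVec_mulVec]
      _ ≤ r * ∑ i, |(T ^ n *ᵥ u) i| := hc _ hsum
      _ ≤ r * (r ^ n * ∑ i, |u i|) := by gcongr
      _ = r ^ (n + 1) * ∑ i, |u i| := by ring

lemma tendsto_pow_mulVec (hT : T ∈ colStochastic ℝ ι) (hc : T.ContractsSumZero r)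
    (hr₀ : 0 ≤ r) (hr₁ : r < 1) {ℓ v : ι → ℝ} (hℓ : T *ᵥ ℓ = ℓ) (hv : ∑ i, v i = ∑ i, ℓ i) :
    Tendsto (fun n => T ^ n *ᵥ v) atTop (𝓝 ℓ) := by
  have hu : ∑ i, (v - ℓ) i = 0 := by simp [Finset.sum_sub_distrib, hv]
  have hbound : ∀ n, ‖T ^ n *ᵥ (v - ℓ)‖ ≤ r ^ n * ∑ i, |(v - ℓ) i| := fun n =>
    (pi_norm_le_iff_of_nonneg (by positivity)).2 fun i =>
      (Finset.single_le_sum (fun j _ => abs_nonneg _) (Finset.mem_univ i)).trans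
        (sum_abs_pow_mulVec_le hT hc hr₀ hu n)
  have hzero : Tendsto (fun n => T ^ n *ᵥ (v - ℓ)) atTop (𝓝 0) :=
    squeeze_zero_norm hbound <| by
      simpa using (tendsto_pow_atTop_nhds_zero_of_lt_one hr₀ hr₁).mul_const
        (∑ i, |(v - ℓ) i|)
  convert hzero.const_add ℓ using 2 with n
  · rw [mulVec_sub, pow_mulVec_eq_self hℓ, add_sub_cancel]
  · rw [add_zero]

lemma exists_mulVec_eq_self_of_mem_colStochastic [Nonempty ι] (hT : T ∈ colStochastic ℝ ι) :
    ∃ u ≠ 0, T *ᵥ u = u := by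
  have hdet : (1 - T).det = 0 := exists_vecMul_eq_zero_iff.1
    ⟨1, one_ne_zero, by rw [vecMul_sub, vecMul_one, one_vecMul_of_mem_colStochastic hT, sub_self]⟩
  obtain ⟨u, hu, h⟩ := exists_mulVec_eq_zero_iff.2 hdet
  exact ⟨u, hu, (sub_eq_zero.1 (by rwa [sub_mulVec, one_mulVec] at h)).symm⟩

lemma exists_probVec_mulVec_eq_self [Nonempty ι] (hT : T ∈ colStochastic ℝ ι)
    (hc : T.ContractsSumZero r) (hr₀ : 0 ≤ r) (hr₁ : r < 1) :
    ∃ ℓ : ι → ℝ, ((∀ i, 0 ≤ ℓ i) ∧ ∑ i, ℓ i = 1) ∧ T *ᵥ ℓ = ℓ := by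
  obtain ⟨u, hu, hTu⟩ := exists_mulVec_eq_self_of_mem_colStochastic hT
  have hsum : ∑ i, u i ≠ 0 := fun h =>
    hu (eq_of_mulVec_eq_self hc hr₁ (by simpa using h) hTu (mulVec_zero T))
  set ℓ := (∑ i, u i)⁻¹ • u
  have hℓ : T *ᵥ ℓ = ℓ := by rw [mulVec_smul, hTu]
  have hℓ₁ : ∑ i, ℓ i = 1 := by
    simp only [ℓ, Pi.smul_apply, smul_eq_mul, ← Finset.mul_sum, inv_mul_cancel₀ hsum]
  refine ⟨ℓ, ⟨fun i => ?_, hℓ₁⟩, hℓ⟩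
  obtain ⟨j⟩ := ‹Nonempty ι›
  have hlim := tendsto_pow_mulVec hT hc hr₀ hr₁ hℓ (v := Pi.single j 1) (by simp [hℓ₁])
  have hj : 0 ≤ (Pi.single j 1 : ι → ℝ) := Pi.single_nonneg.2 zero_le_one
  exact ge_of_tendsto' (tendsto_pi_nhds.1 hlim i) fun n =>
    nonneg_mulVec_of_mem_colStochastic (pow_mem hT n) hj i

end ColStochastic

lemma add_of_mulVec (A : Matrix ι ι ℝ) (p v : ι → ℝ) :
    (A + of fun i _ => p i) *ᵥ v = A *ᵥ v + (∑ j, v j) • p := by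
  ext i
  simp [mulVec, dotProduct, mul_add, Finset.sum_add_distrib, Finset.mul_sum, mul_comm]

variable {A : Matrix ι ι ℝ} {d : ℝ}

lemma sum_abs_mulVec_le (hA : ∀ i j, 0 ≤ A i j) (hcol : ∀ j, ∑ i, A i j = d) (u : ι → ℝ) :
    ∑ i, |(A *ᵥ u) i| ≤ d * ∑ i, |u i| :=
  calc ∑ i, |(A *ᵥ u) i| ≤ ∑ i, ∑ j, A i j * |u j| :=
        Finset.sum_le_sum fun i _ => (Finset.abs_sum_le_sum_abs _ _).trans_eq <|
          Finset.sum_congr rfl fun j _ => by rw [abs_mul, abs_of_nonneg (hA i j)]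
    _ = d * ∑ j, |u j| := by
        rw [Finset.sum_comm, Finset.mul_sum]
        simp only [← Finset.sum_mul, hcol]

lemma inv_smul_add_of_mem_colStochastic [DecidableEq ι] {p : ι → ℝ} {k : ℝ}
    (hA : ∀ i j, 0 ≤ A i j) (hcol : ∀ j, ∑ i, A i j = d) (hp : ∀ i, 0 ≤ p i)
    (hk : k = d + ∑ i, p i) (hk₀ : 0 < k) :
    k⁻¹ • (A + of fun i _ => p i) ∈ colStochastic ℝ ι := by
  refine mem_colStochastic_iff_sum.2 ⟨fun i j => ?_, fun j => ?_⟩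
  · simp only [smul_apply, add_apply, of_apply, smul_eq_mul]
    exact mul_nonneg (inv_nonneg.2 hk₀.le) (add_nonneg (hA i j) (hp i))
  · simp only [smul_apply, add_apply, of_apply, smul_eq_mul, ← Finset.mul_sum,
      Finset.sum_add_distrib, hcol, ← hk, inv_mul_cancel₀ hk₀.ne']

lemma contractsSumZero_inv_smul_add_of (p : ι → ℝ) {k : ℝ} (hA : ∀ i j, 0 ≤ A i j)
    (hcol : ∀ j, ∑ i, A i j = d) (hk : 0 ≤ k) :
    (k⁻¹ • (A + of fun i _ => p i)).ContractsSumZero (d / k) := by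
  intro u hu
  simp only [smul_mulVec, add_of_mulVec, hu, zero_smul, add_zero, Pi.smul_apply, smul_eq_mul,
    abs_mul, abs_inv, abs_of_nonneg hk, ← Finset.mul_sum, div_eq_inv_mul, mul_assoc]
  exact mul_le_mul_of_nonneg_left (sum_abs_mulVec_le hA hcol u) (inv_nonneg.2 hk)

lemma apply_le_mulVec_apply {M : Matrix ι ι ℝ} {v : ι → ℝ} (hM : ∀ i j, 0 ≤ M i j)
    (hv : ∀ j, 0 ≤ v j) {i j : ι} (hij : 1 ≤ M i j) : v j ≤ (M *ᵥ v) i :=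
  calc v j ≤ M i j * v j := le_mul_of_one_le_left (hv j) hij
    _ ≤ (M *ᵥ v) i := Finset.single_le_sum (f := fun j => M i j * v j)
        (fun j _ => mul_nonneg (hM i j) (hv j)) (Finset.mem_univ j)

end Matrix

lemma Equiv.Perm.pos_of_apply_le_mul {ι : Type*} [Fintype ι] {σ : Equiv.Perm ι}
    (hσ : ∀ i j, ∃ n : ℕ, (σ ^ n) i = j) {v : ι → ℝ} {c : ℝ} (hc : 0 ≤ c)
    (hv : 0 < ∑ i, v i) (hle : ∀ i, v (σ i) ≤ c * v i) (i : ι) : 0 < v i := by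
  have hpow : ∀ n : ℕ, ∀ i, v ((σ ^ n) i) ≤ c ^ n * v i := by
    intro n
    induction n with
    | zero => simp
    | succ n ih =>
      intro i
      calc v ((σ ^ (n + 1)) i) = v ((σ ^ n) (σ i)) := by rw [pow_succ, Equiv.Perm.mul_apply]
        _ ≤ c ^ n * v (σ i) := ih (σ i)
        _ ≤ c ^ n * (c * v i) := by gcongr; exact hle i
        _ = c ^ (n + 1) * v i := by ring
  obtain ⟨i₀, -, hi₀⟩ := Finset.exists_lt_of_sum_lt (f := fun _ => (0 : ℝ)) (g := v)
    (by rwa [Finset.sum_const_zero])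
  obtain ⟨n, hn⟩ := hσ i i₀
  exact pos_of_mul_pos_right (hi₀.trans_le (hn ▸ hpow n i)) (pow_nonneg hc n)

namespace ZMod

variable {q : ℕ} [NeZero q]

lemma val_sub_of_lt {a b : ZMod q} (h : a.val < b.val) : (a - b).val = a.val + q - b.val := by
  have hb : b ≠ 0 := by rintro rfl; simp at h
  have hbq := b.val_lt
  rw [sub_eq_add_neg, val_add_of_lt] <;> rw [neg_val, if_neg hb] <;> omega

lemma zero_sub_val_lt_sub_val_iff {a b : ZMod q} (hab : a ≠ b) :
    ((0 : ZMod q) - a).val < (b - a).val ↔ rep q b < rep q a := by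
  have hav := a.val_lt
  have hbv := b.val_lt
  rw [zero_sub, neg_val]
  unfold rep
  by_cases ha : a = 0
  · subst ha
    simp [hab.symm, hbv]
  by_cases hb : b = 0
  · subst hb
    simp only [ha, if_true, if_false, val_zero, zero_sub, neg_val]
    omega
  have hb' : 0 < b.val := val_pos.2 hb
  simp only [ha, hb, if_false]
  rcases le_or_gt a.val b.val with h | h
  · rw [val_sub h]; omega
  · rw [val_sub_of_lt h]; omega

lemma ite_val_sub_lt_sub_ite_succ {a b : ZMod q} (hab : a ≠ b) (j : ZMod q) :
    ((if (j - a).val < (b - a).val then 1 else 0 : ℝ) -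
      if (j + 1 - a).val < (b - a).val then 1 else 0) =
    (if b = j + 1 then 1 else 0 : ℝ) - if a = j + 1 then 1 else 0 := by
  have : Fact (1 < q) := ⟨Nat.one_lt_iff_ne_zero_and_ne_one.2
    ⟨NeZero.ne q, by rintro rfl; exact hab (Subsingleton.elim a b)⟩⟩
  have hsucc : (j + 1 - a).val = ((j - a).val + 1) % q := by
    rw [show j + 1 - a = j - a + 1 by ring, val_add, val_one]
  have hb : b = j + 1 ↔ (j + 1 - a).val = (b - a).val := by
    rw [(val_injective q).eq_iff, sub_left_inj, eq_comm]
  have ha : a = j + 1 ↔ (j + 1 - a).val = 0 := by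
    rw [val_eq_zero, sub_eq_zero, eq_comm]
  have hlen : 0 < (b - a).val := val_pos.2 (sub_ne_zero.2 hab.symm)
  have hlen' := (b - a).val_lt
  have hj := (j - a).val_lt
  simp only [hb, ha, hsucc]
  rcases Nat.lt_or_ge ((j - a).val + 1) q with h | h
  · rw [Nat.mod_eq_of_lt h]
    split_ifs <;> norm_num <;> omega
  · rw [show (j - a).val + 1 = q by omega, Nat.mod_self]
    split_ifs <;> norm_num <;> omega

end ZMod

lemma Equiv.Perm.apply_ne_apply_add_one {q : ℕ} (hq : 2 ≤ q) (σ : Equiv.Perm (ZMod q))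
    (i : ZMod q) : σ i ≠ σ (i + 1) := by
  have : Fact (1 < q) := ⟨hq⟩
  simp

section TransMatrix

variable {q : ℕ} [NeZero q]

lemma transMatrix_nonneg (σ : Equiv.Perm (ZMod q)) (i j : ZMod q) : 0 ≤ transMatrix q σ i j := by
  simp only [transMatrix, of_apply]
  split_ifs <;> norm_num

lemma transMatrix_apply_self (hq : 2 ≤ q) (σ : Equiv.Perm (ZMod q)) (i : ZMod q) :
    transMatrix q σ i (σ i) = 1 := by
  simp [transMatrix, ZMod.val_pos, sub_ne_zero, (σ.apply_ne_apply_add_one hq i).symm]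

lemma sum_transMatrix_add_one (hq : 2 ≤ q) (σ : Equiv.Perm (ZMod q)) (j : ZMod q) :
    ∑ i, transMatrix q σ i (j + 1) = ∑ i, transMatrix q σ i j := by
  have key : ∑ i, (transMatrix q σ i j - transMatrix q σ i (j + 1)) =
      ∑ i, ((if σ (i + 1) = j + 1 then 1 else 0 : ℝ) - if σ i = j + 1 then 1 else 0) :=
    Finset.sum_congr rfl fun i _ =>
      ZMod.ite_val_sub_lt_sub_ite_succ (σ.apply_ne_apply_add_one hq i) j
  have hshift : ∑ i, (if σ (i + 1) = j + 1 then 1 else 0 : ℝ) =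
      ∑ i, if σ i = j + 1 then 1 else 0 :=
    Fintype.sum_equiv (Equiv.addRight 1) _ _ fun _ => rfl
  rw [Finset.sum_sub_distrib, Finset.sum_sub_distrib, hshift, sub_self, sub_eq_zero] at key
  exact key.symm

lemma sum_transMatrix_zero (hq : 2 ≤ q) (σ : Equiv.Perm (ZMod q)) :
    ∑ i, transMatrix q σ i 0 = desNum q σ := by
  rw [desNum, Finset.natCast_card_filter]
  exact Finset.sum_congr rfl fun i _ =>
    if_congr (ZMod.zero_sub_val_lt_sub_val_iff (σ.apply_ne_apply_add_one hq i)) rfl rfl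

lemma sum_transMatrix (hq : 2 ≤ q) (σ : Equiv.Perm (ZMod q)) (j : ZMod q) :
    ∑ i, transMatrix q σ i j = desNum q σ := by
  rw [← ZMod.natCast_zmod_val j]
  induction j.val with
  | zero => simpa using sum_transMatrix_zero hq σ
  | succ n ih => rwa [Nat.cast_succ, sum_transMatrix_add_one hq]

lemma apply_le_transMatrix_add_of_mulVec (hq : 2 ≤ q) (σ : Equiv.Perm (ZMod q))
    {p v : ZMod q → ℝ} (hp : ∀ i, 0 ≤ p i) (hv : ∀ j, 0 ≤ v j) (i : ZMod q) :
    v (σ i) ≤ ((transMatrix q σ + of fun i _ => p i) *ᵥ v) i :=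
  apply_le_mulVec_apply (fun i j => add_nonneg (transMatrix_nonneg σ i j) (hp i)) hv <|
    (transMatrix_apply_self hq σ i).symm.le.trans (le_add_of_nonneg_right (hp i))

end TransMatrix

/-- Perron–Frobenius for the transition matrix `B = A + P` of a pair `(σ, p)`,
where `σ` is a `q`-cycle with `des σ = d`, `p ≠ 0` is a non-negative integer
vector, `P` has all columns equal to `p`, and `k = d + ∑ pᵢ`: there is a unique
probability vector `ℓ` with `Bℓ = kℓ`; it has strictly positive components and
`ℓ = lim (1/kⁿ) Bⁿ v` for every probability vector `v`. -/
theorem pairTransMatrix_perron_frobenius (q d k : ℕ) [NeZero q] (hq : 2 ≤ q)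
    (σ : Equiv.Perm (ZMod q)) (hσ : IsQCycle q σ) (hd : desNum q σ = d)
    (p : ZMod q → ℕ) (hp : p ≠ 0)
    (B : Matrix (ZMod q) (ZMod q) ℝ)
    (hB : B = transMatrix q σ + Matrix.of fun i _ : ZMod q => (p i : ℝ))
    (hk : k = d + ∑ i, p i) :
    (∃! ℓ : ZMod q → ℝ, IsProbVec q ℓ ∧ B.mulVec ℓ = (k : ℝ) • ℓ) ∧
    (∀ ℓ : ZMod q → ℝ, IsProbVec q ℓ → B.mulVec ℓ = (k : ℝ) • ℓ →
      (∀ i, 0 < ℓ i) ∧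
      ∀ v : ZMod q → ℝ, IsProbVec q v →
        Filter.Tendsto (fun n : ℕ => (1 / (k : ℝ) ^ n) • (B ^ n).mulVec v)
          Filter.atTop (nhds ℓ)) := by
  subst hB
  have hcol : ∀ j, ∑ i, transMatrix q σ i j = d := fun j => by rw [sum_transMatrix hq σ j, hd]
  have hp₀ : ∀ i, (0 : ℝ) ≤ p i := fun i => Nat.cast_nonneg (p i)
  have hdk : d < k := by
    obtain ⟨i, hi⟩ := Function.ne_iff.1 hp
    have := Finset.single_le_sum (fun j _ => Nat.zero_le (p j)) (Finset.mem_univ i)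
    simp only [Pi.zero_apply] at hi
    omega
  have hk₀ : (0 : ℝ) < k := by exact_mod_cast hdk.pos
  have hr : (d : ℝ) / k < 1 := (div_lt_one hk₀).2 (by exact_mod_cast hdk)
  have hT := inv_smul_add_of_mem_colStochastic (transMatrix_nonneg σ) hcol hp₀
    (by rw [hk]; push_cast; rfl) hk₀
  have hc :=
    contractsSumZero_inv_smul_add_of (fun i => (p i : ℝ)) (transMatrix_nonneg σ) hcol hk₀.le
  set B := transMatrix q σ + of fun i _ => (p i : ℝ)
  have hfix : ∀ ℓ, B *ᵥ ℓ = (k : ℝ) • ℓ ↔ ((k : ℝ)⁻¹ • B) *ᵥ ℓ = ℓ := fun ℓ => by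
    rw [smul_mulVec, inv_smul_eq_iff₀ hk₀.ne', eq_comm]
  have hiter : ∀ n v, (1 / (k : ℝ) ^ n) • (B ^ n).mulVec v = ((k : ℝ)⁻¹ • B) ^ n *ᵥ v :=
    fun n v => by rw [smul_pow, smul_mulVec, one_div, inv_pow]
  obtain ⟨ℓ, hℓ, hTℓ⟩ := exists_probVec_mulVec_eq_self hT hc (by positivity) hr
  refine ⟨⟨ℓ, ⟨hℓ, (hfix ℓ).2 hTℓ⟩, fun ℓ' h =>
    eq_of_mulVec_eq_self hc hr (h.1.2.trans hℓ.2.symm) ((hfix ℓ').1 h.2) hTℓ⟩,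
    fun ℓ' hℓ' hBℓ' => ⟨σ.pos_of_apply_le_mul hσ hk₀.le (hℓ'.2 ▸ one_pos) fun i => ?_,
      fun v hv => ?_⟩⟩
  · exact (apply_le_transMatrix_add_of_mulVec hq σ hp₀ hℓ'.1 i).trans_eq (congrFun hBℓ' i)
  · simpa only [hiter] using
      tendsto_pow_mulVec hT hc (by positivity) hr ((hfix ℓ').1 hBℓ') (hv.2.trans hℓ'.2.symm)
end
end
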